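/- Symmetry of the no-discrimination optimum: let c > 0 and define h(n0,n1) = V_L(n0,n1) − c·(n0+n1) on [0,∞)×[0,∞). If (n0,n1) maximizes h over [0,∞)×[0,∞), then n0 = n1. -/
import Mathlib


/-- The denominator `D(n0,n1) = σ²(n0+n1+2 n0 n1) + (1+n0)(1+n1)`. -/
noncomputable def Dden (σ n0 n1 : ℝ) : ℝ :=
  σ^2 * (n0 + n1 + 2*n0*n1) + (1+n0)*(1+n1)

/-- Forecaster value `V_L`. -/
noncomputable def VL (σ n0 n1 : ℝ) : ℝ :=
  σ^4 * (n0 + n1 + 2*n0*n1) / Dden σ n0 n1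

/-- Nowcaster value `V_S`. -/
noncomputable def VS (σ n0 n1 : ℝ) : ℝ :=
  VL σ n0 n1 + (3*σ^2*n0*n1 + 2*σ^2*n1 + n1 + n0*n1) / Dden σ n0 n1

lemma Dden_pos (σ n0 n1 : ℝ) (h0 : 0 ≤ n0) (h1 : 0 ≤ n1) : 0 < Dden σ n0 n1 := by
  unfold Dden
  nlinarith [sq_nonneg σ, mul_nonneg h0 h1, sq_nonneg (σ*n0), sq_nonneg (σ*n1),
    mul_nonneg (mul_nonneg (sq_nonneg σ) h0) h1]

/-- Symmetry of the no-discrimination optimum: any maximizer of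
`V_L(n0,n1) − c(n0+n1)` over the nonnegative quadrant satisfies `n0 = n1`. -/
theorem stmt13 (σ c : ℝ) (hσ : 0 < σ) (hc : 0 < c)
    (n0 n1 : ℝ) (h0 : 0 ≤ n0) (h1 : 0 ≤ n1)
    (hmax : ∀ m0 m1 : ℝ, 0 ≤ m0 → 0 ≤ m1 →
      VL σ m0 m1 - c*(m0+m1) ≤ VL σ n0 n1 - c*(n0+n1)) :
    n0 = n1 := by
  by_contra hne
  set m : ℝ := (n0 + n1) / 2 with hm
  have hm0 : 0 ≤ m := by positivity
  have hkey := hmax m m hm0 hm0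
  have hle : VL σ m m ≤ VL σ n0 n1 := by
    have : m + m = n0 + n1 := by ring
    rw [this] at hkey; linarith
  have hsq : 0 < (n0 - n1)^2 := by
    have : n0 - n1 ≠ 0 := sub_ne_zero.mpr hne
    positivity
  have hD1 : 0 < Dden σ n0 n1 := Dden_pos σ n0 n1 h0 h1
  have hD2 : 0 < Dden σ m m := Dden_pos σ m m hm0 hm0
  have hlt : VL σ n0 n1 < VL σ m m := by
    unfold VL
    rw [div_lt_div_iff₀ hD1 hD2]
    unfold Dden
    rw [hm]
    have h4 : 0 < σ^4 := by positivity
    have hs2 : 0 < 2 + n0 + n1 := by linarith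
    nlinarith [mul_pos (mul_pos h4 hs2) hsq]
  linarith
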